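/- arXiv:2508.10153 — 2 statements merged into one kernel-verified Lean document; each statement's English description precedes it below -/
import Mathlib

section
/- For any odd A, B ∈ F₂[[q]], the parity vector map PV_{A,B} : F₂[[q]] → ℤ₂ is a bijection and satisfies PV_{A,B} ∘ T_{A,B} = σ ∘ PV_{A,B}, where σ is the shift map on ℤ₂; hence T_{A,B} is conjugate to the shift map via PV_{A,B}. -/
open PowerSeries
open scoped Classical

/-- Shift map on `F₂[[q]]`: equals `x / q` whenever `q ∣ x`. -/
noncomputable def divq (x : PowerSeries (ZMod 2)) : PowerSeries (ZMod 2) :=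
  PowerSeries.mk fun n => PowerSeries.coeff (n + 1) x

/-- `T_{A,B}(x) = x/q` if `q ∣ x`, and `(A*x + B)/q` otherwise.  (When `A`, `B`, `x` are
all odd, `A*x + B` is divisible by `q`, so `divq` computes the true quotient there.) -/
noncomputable def Tab (A B x : PowerSeries (ZMod 2)) : PowerSeries (ZMod 2) :=
  if X ∣ x then divq x else divq (A * x + B)
/-- `half x` is the unique `y` with `x = 2 * y`, when `2 ∣ x` (and `0` otherwise). -/
noncomputable def half (x : ℤ_[2]) : ℤ_[2] :=
  if h : (2 : ℤ_[2]) ∣ x then h.choose else 0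

/-- The `3x+1` map `T : ℤ₂ → ℤ₂`: `x/2` if `x` is even, `(3x+1)/2` if `x` is odd. -/
noncomputable def T3x1 (x : ℤ_[2]) : ℤ_[2] :=
  if (2 : ℤ_[2]) ∣ x then half x else half (3 * x + 1)

/-- The shift map `σ : ℤ₂ → ℤ₂`: `x/2` if `x` is even, `(x-1)/2` if `x` is odd. -/
noncomputable def shiftZ (x : ℤ_[2]) : ℤ_[2] :=
  if (2 : ℤ_[2]) ∣ x then half x else half (x - 1)

/-- The parity vector `PV_{A,B}(x) = Σ_k x_k 2^k ∈ ℤ₂`, where `x_k ∈ {0,1}` is the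
parity (constant coefficient) of `T_{A,B}^k(x)`. -/
noncomputable def PV (A B x : PowerSeries (ZMod 2)) : ℤ_[2] :=
  ∑' k : ℕ, ((PowerSeries.constantCoeff ((Tab A B)^[k] x)).val : ℤ_[2]) * 2 ^ k

/-!
`PV_{A,B}` factors as `x ↦ (parity of T^k x)_k` followed by the digit sum
`ε ↦ Σ ε_k 2^k`, a bijection `(ℕ → 𝔽₂) → ℤ₂` carrying the shift of digit sequences to `σ`;
this gives the conjugacy. For bijectivity: if `x - y = q^n w` then `T x - T y = C q^(n-1) w`
with `C` odd (`C = 1` or `A`), so the parities of `T^k x` and `T^k y` agree for `k < n` and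
differ at `k = n` by `w(0)`. Hence the `n`-th parity is `x_n` plus a function of
`x_0, …, x_(n-1)`: as a map of coefficient sequences the parity vector is unitriangular,
hence bijective.
-/

section Unitriangular

variable {R : Type*} [Ring R]

def IsUnitriangular (P : R⟦X⟧ → ℕ → R) : Prop :=
  ∀ x y n, (∀ i < n, coeff i x = coeff i y) → P x n - P y n = coeff n x - coeff n y

/-- Since `P x n - x n` only depends on the coefficients of `x` below `n`, this choice of the
`n`-th coefficient forces `P x n = d n`. -/
noncomputable def unitriangularInvCoeff (P : R⟦X⟧ → ℕ → R) (d : ℕ → R) : ℕ → R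
  | n => d n - P (mk fun i => if i < n then unitriangularInvCoeff P d i else 0) n

namespace IsUnitriangular

variable {P : R⟦X⟧ → ℕ → R}

theorem injective (hP : IsUnitriangular P) : Function.Injective P := by
  intro x y hxy
  ext n
  induction n using Nat.strong_induction_on with
  | _ n ih => rw [← sub_eq_zero, ← hP x y n ih, hxy, sub_self]

theorem apply_mk_unitriangularInvCoeff (hP : IsUnitriangular P) (d : ℕ → R) :
    P (mk (unitriangularInvCoeff P d)) = d := by
  funext n
  set x' : R⟦X⟧ := mk fun i => if i < n then unitriangularInvCoeff P d i else 0
  have hx' : coeff n x' = 0 := by simp [x']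
  have h := hP (mk (unitriangularInvCoeff P d)) x' n fun i hi => by simp [x', hi]
  rw [hx', sub_zero, coeff_mk, unitriangularInvCoeff, sub_eq_iff_eq_add] at h
  rw [h, sub_add_cancel]

theorem bijective (hP : IsUnitriangular P) : Function.Bijective P :=
  ⟨hP.injective, fun d => ⟨_, hP.apply_mk_unitriangularInvCoeff d⟩⟩

end IsUnitriangular

end Unitriangular

theorem coeff_divq (x : PowerSeries (ZMod 2)) (n : ℕ) : coeff n (divq x) = coeff (n + 1) x :=
  coeff_mk _ _

theorem divq_sub (x y : PowerSeries (ZMod 2)) : divq (x - y) = divq x - divq y := by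
  ext n
  simp only [coeff_divq, map_sub]

theorem divq_X_mul (w : PowerSeries (ZMod 2)) : divq (X * w) = w := by
  ext n
  rw [coeff_divq, coeff_succ_X_mul]

section Tab

variable {A B : PowerSeries (ZMod 2)}

theorem exists_Tab_sub_Tab (hA : constantCoeff A = 1) {x y w : PowerSeries (ZMod 2)}
    (h : x - y = X * w) :
    ∃ C, constantCoeff C = 1 ∧ Tab A B x - Tab A B y = C * w := by
  have hxy : X ∣ x ↔ X ∣ y := dvd_iff_dvd_of_dvd_sub ⟨w, h⟩
  by_cases hx : X ∣ x
  · refine ⟨1, map_one _, ?_⟩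
    rw [Tab, Tab, if_pos hx, if_pos (hxy.mp hx), ← divq_sub, h, divq_X_mul, one_mul]
  · refine ⟨A, hA, ?_⟩
    rw [Tab, Tab, if_neg hx, if_neg (hxy.not.mp hx), ← divq_sub,
      show A * x + B - (A * y + B) = X * (A * w) by linear_combination A * h, divq_X_mul]

theorem constantCoeff_iterate_Tab_sub (hA : constantCoeff A = 1) (n : ℕ)
    {x y w : PowerSeries (ZMod 2)} (h : x - y = X ^ n * w) :
    constantCoeff ((Tab A B)^[n] x) - constantCoeff ((Tab A B)^[n] y) = constantCoeff w := by
  induction n generalizing x y w with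
  | zero =>
    rw [Function.iterate_zero_apply, Function.iterate_zero_apply, ← map_sub, h, pow_zero, one_mul]
  | succ n ih =>
    obtain ⟨C, hC, hT⟩ := exists_Tab_sub_Tab (B := B) hA (by rw [h, pow_succ', mul_assoc])
    rw [Function.iterate_succ_apply, Function.iterate_succ_apply,
      ih (hT.trans (mul_left_comm _ _ _)), map_mul, hC, one_mul]

noncomputable def parityVector (A B x : PowerSeries (ZMod 2)) : ℕ → ZMod 2 :=
  fun k => constantCoeff ((Tab A B)^[k] x)

theorem isUnitriangular_parityVector (hA : constantCoeff A = 1) :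
    IsUnitriangular (parityVector A B) := by
  intro x y n h
  obtain ⟨w, hw⟩ : X ^ n ∣ x - y :=
    X_pow_dvd_iff.mpr fun i hi => by rw [map_sub, h i hi, sub_self]
  rw [parityVector, parityVector, constantCoeff_iterate_Tab_sub hA n hw, ← map_sub, hw,
    coeff_X_pow_mul', if_pos le_rfl, Nat.sub_self, coeff_zero_eq_constantCoeff_apply]

end Tab

theorem PadicInt.eq_of_forall_pow_dvd_sub {p : ℕ} [Fact p.Prime] {x y : ℤ_[p]}
    (h : ∀ n, (p : ℤ_[p]) ^ n ∣ x - y) : x = y :=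
  PadicInt.ext_of_toZModPow.mp fun n => sub_eq_zero.mp <| by
    rw [← map_sub, ← RingHom.mem_ker, PadicInt.ker_toZModPow, Ideal.mem_span_singleton]
    exact h n

theorem half_two_mul (t : ℤ_[2]) : half (2 * t) = t := by
  have h : (2 : ℤ_[2]) ∣ 2 * t := dvd_mul_right 2 t
  rw [half, dif_pos h]
  exact (mul_left_cancel₀ two_ne_zero h.choose_spec).symm

theorem shiftZ_val_add_two_mul (v : ZMod 2) (t : ℤ_[2]) : shiftZ (v.val + 2 * t) = t := by
  obtain rfl | rfl : v = 0 ∨ v = 1 := by fin_cases v; exacts [.inl rfl, .inr rfl]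
  · rw [ZMod.val_zero, Nat.cast_zero, zero_add, shiftZ, if_pos (dvd_mul_right 2 t), half_two_mul]
  · have hodd : ¬ (2 : ℤ_[2]) ∣ 1 + 2 * t := fun h =>
      PadicInt.p_nonunit (p := 2) <| by
        exact_mod_cast isUnit_of_dvd_one ((dvd_add_left (dvd_mul_right 2 t)).mp h)
    rw [ZMod.val_one, Nat.cast_one, shiftZ, if_neg hodd, add_sub_cancel_left, half_two_mul]

theorem toZMod_val_add_two_mul (v : ZMod 2) (t : ℤ_[2]) :
    PadicInt.toZMod (v.val + 2 * t : ℤ_[2]) = v := by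
  have h2 : PadicInt.toZMod (2 : ℤ_[2]) = 0 := by
    rw [map_ofNat]; rfl
  rw [map_add, map_mul, h2, zero_mul, add_zero, map_natCast, ZMod.natCast_zmod_val]

theorem val_toZMod_add_two_mul_shiftZ (w : ℤ_[2]) :
    ((PadicInt.toZMod w).val + 2 * shiftZ w : ℤ_[2]) = w := by
  obtain ⟨t, ht⟩ : (2 : ℤ_[2]) ∣ w - (PadicInt.toZMod w).val := by
    simpa [PadicInt.maximalIdeal_eq_span_p, Ideal.mem_span_singleton, ZMod.cast_eq_val]
      using PadicInt.toZMod_spec w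
  have hw := eq_add_of_sub_eq' ht
  have hshift : shiftZ w = t := by rw [hw, shiftZ_val_add_two_mul]
  rw [hshift, ← hw]

noncomputable def digitSum (ε : ℕ → ZMod 2) : ℤ_[2] :=
  ∑' k, ((ε k).val : ℤ_[2]) * 2 ^ k

theorem summable_digitSum (ε : ℕ → ZMod 2) :
    Summable fun k => ((ε k).val : ℤ_[2]) * 2 ^ k := by
  refine .of_norm_bounded (summable_geometric_of_lt_one (r := 2⁻¹) (by norm_num) (by norm_num))
    fun k => ?_
  have h2 : ‖(2 : ℤ_[2])‖ = 2⁻¹ := by exact_mod_cast PadicInt.norm_p (p := 2)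
  rw [norm_mul, norm_pow, h2]
  exact mul_le_of_le_one_left (by positivity) (PadicInt.norm_le_one _)

theorem digitSum_eq_val_add_two_mul (ε : ℕ → ZMod 2) :
    digitSum ε = (ε 0).val + 2 * digitSum fun k => ε (k + 1) := by
  rw [digitSum, (summable_digitSum ε).tsum_eq_zero_add, pow_zero, mul_one, digitSum,
    ← (summable_digitSum _).tsum_mul_left]
  simp only [pow_succ', mul_left_comm]

theorem shiftZ_digitSum (ε : ℕ → ZMod 2) :
    shiftZ (digitSum ε) = digitSum fun k => ε (k + 1) := by
  rw [digitSum_eq_val_add_two_mul, shiftZ_val_add_two_mul]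

theorem toZMod_iterate_shiftZ_digitSum (ε : ℕ → ZMod 2) (n : ℕ) :
    PadicInt.toZMod (shiftZ^[n] (digitSum ε)) = ε n := by
  induction n generalizing ε with
  | zero => rw [Function.iterate_zero_apply, digitSum_eq_val_add_two_mul, toZMod_val_add_two_mul]
  | succ n ih => rw [Function.iterate_succ_apply, shiftZ_digitSum, ih]

theorem eq_of_forall_toZMod_iterate_shiftZ_eq {x y : ℤ_[2]}
    (h : ∀ n, PadicInt.toZMod (shiftZ^[n] x) = PadicInt.toZMod (shiftZ^[n] y)) : x = y := by
  refine PadicInt.eq_of_forall_pow_dvd_sub fun n => ?_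
  rw [Nat.cast_ofNat]
  induction n generalizing x y with
  | zero => exact one_dvd _
  | succ n ih =>
    have hsub : x - y = 2 * (shiftZ x - shiftZ y) := by
      have hv : ((PadicInt.toZMod x).val : ℤ_[2]) = (PadicInt.toZMod y).val :=
        congrArg (fun v : ZMod 2 => (v.val : ℤ_[2])) (h 0)
      linear_combination hv - val_toZMod_add_two_mul_shiftZ x + val_toZMod_add_two_mul_shiftZ y
    rw [hsub, pow_succ']
    exact mul_dvd_mul_left _ (ih fun k => h (k + 1))

theorem digitSum_bijective : Function.Bijective digitSum := by
  refine ⟨fun ε δ h => funext fun n => ?_, fun z => ⟨fun n => PadicInt.toZMod (shiftZ^[n] z),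
    eq_of_forall_toZMod_iterate_shiftZ_eq (toZMod_iterate_shiftZ_digitSum _)⟩⟩
  rw [← toZMod_iterate_shiftZ_digitSum ε, h, toZMod_iterate_shiftZ_digitSum]

theorem PV_bijective_and_conjugates_shift_general (A B : PowerSeries (ZMod 2))
    (hA : PowerSeries.constantCoeff A = 1) :
    Function.Bijective (PV A B) ∧ PV A B ∘ Tab A B = shiftZ ∘ PV A B := by
  have hPV : PV A B = digitSum ∘ parityVector A B := rfl
  rw [hPV]
  refine ⟨digitSum_bijective.comp (isUnitriangular_parityVector hA).bijective, ?_⟩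
  funext x
  exact (shiftZ_digitSum (parityVector A B x)).symm

/-- For odd `A, B`, the parity vector map `PV_{A,B} : F₂[[q]] → ℤ₂` is a bijection and
conjugates `T_{A,B}` to the shift map `σ`. -/
theorem PV_bijective_and_conjugates_shift (A B : PowerSeries (ZMod 2))
    (hA : PowerSeries.constantCoeff A = 1)
    (hB : PowerSeries.constantCoeff B = 1) :
    Function.Bijective (PV A B) ∧ PV A B ∘ Tab A B = shiftZ ∘ PV A B :=
  PV_bijective_and_conjugates_shift_general A B hA
end

section
/- Let A, B ∈ F₂[[q]] be odd and let n be a positive integer. For every function p : {0,1,…,n−1} → F₂ there exists a ∈ F₂[[q]] such that the parity of T_{A,B}^k(a) equals p(k) for all k < n; moreover, a is unique modulo q^n (any two such elements are congruent mod q^n). Equivalently, the induced map from F₂[[q]]/(q^n) to the set of parity sequences of length n is a bijection. -/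
open PowerSeries
open scoped Classical

/-!
Multiplying by `q` turns `T_{A,B}` into the affine map `x ↦ x` on even and `x ↦ A x + B` on odd
arguments. Hence `a` is recovered from its parity together with `T_{A,B}(a)`: it is
`q T_{A,B}(a)` when even and `A⁻¹ (q T_{A,B}(a) + B)` when odd, and every pair (parity, image)
arises. Iterating, `a mod q^n` corresponds exactly to the first `n` parities, one power of `q`
per step.
-/

theorem X_mul_divq {x : PowerSeries (ZMod 2)} (hx : X ∣ x) : X * divq x = x := by
  conv_rhs => rw [eq_X_mul_shift_add_const x, X_dvd_iff.mp hx, map_zero, add_zero]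
  rfl

theorem ZMod.eq_zero_or_eq_one_of_two (c : ZMod 2) : c = 0 ∨ c = 1 := by
  fin_cases c
  exacts [Or.inl rfl, Or.inr rfl]

section Tab

variable {A B : PowerSeries (ZMod 2)}

theorem X_mul_Tab (hA : constantCoeff A = 1) (hB : constantCoeff B = 1)
    (x : PowerSeries (ZMod 2)) :
    X * Tab A B x = if X ∣ x then x else A * x + B := by
  unfold Tab
  split_ifs with hx
  · exact X_mul_divq hx
  · have hx1 : constantCoeff x = 1 :=
      (ZMod.eq_zero_or_eq_one_of_two _).resolve_left (mt X_dvd_iff.mpr hx)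
    exact X_mul_divq (X_dvd_iff.mpr (by simp [hA, hB, hx1]; decide))

theorem exists_constantCoeff_eq_and_Tab_eq (hA : constantCoeff A = 1)
    (hB : constantCoeff B = 1) (c : ZMod 2) (y : PowerSeries (ZMod 2)) :
    ∃ x, constantCoeff x = c ∧ Tab A B x = y := by
  have hAunit : A * A⁻¹ = 1 := PowerSeries.mul_inv_cancel A (by simp [hA])
  have : CharP (PowerSeries (ZMod 2)) 2 := charP_of_injective_ringHom C_injective 2
  rcases ZMod.eq_zero_or_eq_one_of_two c with hc | hc
  · refine ⟨X * y, by simp [hc], X_mul_cancel ?_⟩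
    rw [X_mul_Tab hA hB, if_pos (dvd_mul_right X y)]
  · set x := A⁻¹ * (X * y + B)
    have hx : constantCoeff x = 1 := by simp [x, hA, hB]
    refine ⟨x, hx.trans hc.symm, X_mul_cancel ?_⟩
    rw [X_mul_Tab hA hB, if_neg (by rw [X_dvd_iff, hx]; decide), ← mul_assoc, hAunit, one_mul,
      add_assoc, CharTwo.add_self_eq_zero, add_zero]

theorem X_pow_succ_dvd_sub_of_dvd_Tab_sub (hA : constantCoeff A = 1)
    (hB : constantCoeff B = 1) {a b : PowerSeries (ZMod 2)} {m : ℕ}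
    (hab : constantCoeff a = constantCoeff b) (h : X ^ m ∣ Tab A B a - Tab A B b) :
    X ^ (m + 1) ∣ a - b := by
  have hX : X ^ (m + 1) ∣ X * Tab A B a - X * Tab A B b := by
    rw [← mul_sub, pow_succ']
    exact mul_dvd_mul_left X h
  have hpar : X ∣ a ↔ X ∣ b := by simp only [X_dvd_iff, hab]
  rw [X_mul_Tab hA hB, X_mul_Tab hA hB] at hX
  by_cases ha : X ∣ a
  · rwa [if_pos ha, if_pos (hpar.mp ha)] at hX
  · rw [if_neg ha, if_neg (mt hpar.mpr ha), add_sub_add_right_eq_sub, ← mul_sub] at hX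
    exact (IsUnit.dvd_mul_left (isUnit_iff_constantCoeff.mpr (by simp [hA]))).mp hX

theorem exists_parities_Tab_iterate (hA : constantCoeff A = 1) (hB : constantCoeff B = 1) :
    ∀ (n : ℕ) (p : Fin n → ZMod 2), ∃ a : PowerSeries (ZMod 2),
      ∀ k : Fin n, constantCoeff ((Tab A B)^[k] a) = p k
  | 0, _ => ⟨0, fun k => k.elim0⟩
  | n + 1, p => by
    obtain ⟨y, hy⟩ := exists_parities_Tab_iterate hA hB n (Fin.tail p)
    obtain ⟨a, ha, hTa⟩ := exists_constantCoeff_eq_and_Tab_eq hA hB (p 0) y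
    refine ⟨a, Fin.cases ha fun k => ?_⟩
    rw [Fin.val_succ, Function.iterate_succ_apply, hTa]
    exact hy k

theorem X_pow_dvd_sub_of_parities_Tab_iterate_eq (hA : constantCoeff A = 1)
    (hB : constantCoeff B = 1) :
    ∀ (n : ℕ) (a b : PowerSeries (ZMod 2)),
      (∀ k < n, constantCoeff ((Tab A B)^[k] a) = constantCoeff ((Tab A B)^[k] b)) →
      X ^ n ∣ a - b
  | 0, _, _, _ => by simp
  | n + 1, a, b, h =>
    X_pow_succ_dvd_sub_of_dvd_Tab_sub hA hB (h 0 n.succ_pos) <|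
      X_pow_dvd_sub_of_parities_Tab_iterate_eq hA hB n _ _ fun k hk => h (k + 1) (by omega)

end Tab

theorem Tab_parity_sequences_bijective_general (A B : PowerSeries (ZMod 2))
    (hA : PowerSeries.constantCoeff A = 1)
    (hB : PowerSeries.constantCoeff B = 1)
    (n : ℕ) :
    (∀ p : Fin n → ZMod 2, ∃ a : PowerSeries (ZMod 2),
        ∀ k : Fin n, PowerSeries.constantCoeff ((Tab A B)^[k] a) = p k) ∧
    (∀ a b : PowerSeries (ZMod 2),
        (∀ k < n, PowerSeries.constantCoeff ((Tab A B)^[k] a) =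
          PowerSeries.constantCoeff ((Tab A B)^[k] b)) →
        X ^ n ∣ a - b) :=
  ⟨exists_parities_Tab_iterate hA hB n, X_pow_dvd_sub_of_parities_Tab_iterate_eq hA hB n⟩

/-- For odd `A, B` and `n > 0`: every length-`n` parity sequence is realized by some
`a ∈ F₂[[q]]`, and the realizing element is unique modulo `q^n`; i.e., the induced map
from `F₂[[q]]/(q^n)` to parity sequences of length `n` is a bijection. -/
theorem Tab_parity_sequences_bijective (A B : PowerSeries (ZMod 2))
    (hA : PowerSeries.constantCoeff A = 1)
    (hB : PowerSeries.constantCoeff B = 1)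
    (n : ℕ) (hn : 0 < n) :
    (∀ p : Fin n → ZMod 2, ∃ a : PowerSeries (ZMod 2),
        ∀ k : Fin n, PowerSeries.constantCoeff ((Tab A B)^[k] a) = p k) ∧
    (∀ a b : PowerSeries (ZMod 2),
        (∀ k < n, PowerSeries.constantCoeff ((Tab A B)^[k] a) =
          PowerSeries.constantCoeff ((Tab A B)^[k] b)) →
        X ^ n ∣ a - b) :=
  Tab_parity_sequences_bijective_general A B hA hB n
end
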